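/- Let q be a prime power, let n and t be integers with 0 ≤ t ≤ n, and let Y be a nonempty subset of GL(n,q) that is both a t-design and an (n−t)-code. Then for each i ∈ {0,1,…,n−1}: (1/|Y|) · |{(x,y) ∈ Y × Y : rank(x − y) = n − i}| = Σ_{j=i}^{t} (−1)^{j−i} q^{C(j−i,2)} [j choose i]_q [n choose j]_q · ( |Y| / ∏_{k=0}^{j−1}(q^n − q^k) − 1 ), where C(m,2) = m(m−1)/2. -/

import Mathlib

/-- The `q`-analogue `[m]_q = 1 + q + ⋯ + q^{m-1}` of the natural number `m`. -/
def qInt (q m : ℕ) : ℕ := ∑ i ∈ Finset.range m, q ^ i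

/-- The `q`-factorial `[m]_q! = [m]_q [m-1]_q ⋯ [1]_q`. -/
def qFactorial (q m : ℕ) : ℕ := ∏ i ∈ Finset.range m, qInt q (i + 1)

/-- The Gaussian binomial coefficient `[m choose k]_q = [m]_q! / ([k]_q! [m-k]_q!)`. -/
def qBinom (q m k : ℕ) : ℕ := qFactorial q m / (qFactorial q k * qFactorial q (m - k))

/-- A subset `Y` of `GL(n,q)` is a `t`-design if it is transitive on ordered `t`-tuples of
linearly independent vectors of `F_q^n`. -/
def IsTDesignGL (F : Type) [Field F] [Fintype F] (n t : ℕ) (Y : Set (GL (Fin n) F)) : Prop :=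
  ∃ r : ℕ, ∀ a b : Fin t → (Fin n → F), LinearIndependent F a → LinearIndependent F b →
    Nat.card {g : GL (Fin n) F // g ∈ Y ∧
      ∀ m, Matrix.mulVec (g : Matrix (Fin n) (Fin n) F) (a m) = b m} = r

/-- A subset `Y` of `GL(n,q)` is a `d`-code if `rank(x − y) ≥ d` for all distinct `x, y ∈ Y`. -/
def IsDCodeGL (F : Type) [Field F] [Fintype F] (n d : ℕ) (Y : Set (GL (Fin n) F)) : Prop :=
  ∀ x ∈ Y, ∀ y ∈ Y, x ≠ y →
    d ≤ Matrix.rank ((x : Matrix (Fin n) (Fin n) F) - (y : Matrix (Fin n) (Fin n) F))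

/-!
For `x, y ∈ GL(n,q)` the linearly independent `j`-tuples on which `x` and `y` agree are those
of `ker (x - y)`, a space of dimension `s = n - rank (x - y)`; there are
`∏_{k<j} (q^s - q^k) = [s choose j]_q ∏_{k<j} (q^j - q^k)` of them. A `t`-design is a `j`-design
for every `j ≤ t`, and counting the triples `(x, y, a)` with `x a = y a` by `a` first gives
`Σ_{x,y ∈ Y} [s(x,y) choose j]_q = |Y|² [n choose j]_q / ∏_{k<j} (q^n - q^k)` for `j ≤ t`.
As `Y` is an `(n-t)`-code, `s(x,y) ≤ t` for `x ≠ y`, so Gaussian binomial inversion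
`Σ_j (-1)^(j-i) q^C(j-i,2) [j choose i]_q [s choose j]_q = δ_{s,i}` (for `s ≤ t`) isolates the
pairs with `s = i`, while the diagonal, where `s = n`, contributes
`|Y| Σ_j (-1)^(j-i) q^C(j-i,2) [j choose i]_q [n choose j]_q`.
-/

open Finset

-- The `q`-Pascal rule, free of the truncating division in `qBinom`.
def gaussBinom (q : ℕ) : ℕ → ℕ → ℕ
  | _, 0 => 1
  | 0, _ + 1 => 0
  | m + 1, k + 1 => q ^ (k + 1) * gaussBinom q m (k + 1) + gaussBinom q m k

section GaussianBinomial

variable {q : ℕ}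

@[simp]
theorem gaussBinom_zero_right (m : ℕ) : gaussBinom q m 0 = 1 := by
  cases m <;> rfl

theorem gaussBinom_succ_succ (m k : ℕ) :
    gaussBinom q (m + 1) (k + 1) = q ^ (k + 1) * gaussBinom q m (k + 1) + gaussBinom q m k :=
  rfl

theorem gaussBinom_eq_zero_of_lt {m k : ℕ} (h : m < k) : gaussBinom q m k = 0 := by
  induction m generalizing k with
  | zero => obtain ⟨k, rfl⟩ := Nat.exists_eq_add_one.mpr h; rfl
  | succ m ih =>
    obtain ⟨k, rfl⟩ := Nat.exists_eq_add_one.mpr (Nat.zero_lt_of_lt h)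
    rw [gaussBinom_succ_succ, ih (by omega), ih (by omega), mul_zero]

@[simp]
theorem gaussBinom_self (m : ℕ) : gaussBinom q m m = 1 := by
  induction m with
  | zero => rfl
  | succ m ih => rw [gaussBinom_succ_succ, ih, gaussBinom_eq_zero_of_lt m.lt_succ_self, mul_zero]

theorem qInt_add (a b : ℕ) : qInt q (a + b) = qInt q a + q ^ a * qInt q b := by
  simp only [qInt, sum_range_add, mul_sum, pow_add]

@[simp]
theorem qFactorial_zero : qFactorial q 0 = 1 :=
  rfl

theorem qFactorial_succ (m : ℕ) : qFactorial q (m + 1) = qFactorial q m * qInt q (m + 1) :=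
  prod_range_succ _ _

theorem qFactorial_pos (q m : ℕ) : 0 < qFactorial q m :=
  prod_pos fun i _ => sum_pos' (fun _ _ => Nat.zero_le _) ⟨0, by simp⟩

theorem gaussBinom_mul_qFactorial_mul_qFactorial {m k : ℕ} (h : k ≤ m) :
    gaussBinom q m k * (qFactorial q k * qFactorial q (m - k)) = qFactorial q m := by
  induction m generalizing k with
  | zero =>
    obtain rfl : k = 0 := by omega
    rfl
  | succ m ih =>
    rcases k with _ | k
    · simp
    obtain rfl | hkm : k = m ∨ k < m := by omega
    · simp
    obtain ⟨d, rfl⟩ : ∃ d, m = k + 1 + d := ⟨m - (k + 1), by omega⟩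
    have h1 := ih (k := k + 1) (by omega)
    have h2 := ih (k := k) (by omega)
    rw [show k + 1 + d - (k + 1) = d by omega, qFactorial_succ k] at h1
    rw [show k + 1 + d - k = d + 1 by omega, qFactorial_succ d] at h2
    rw [show k + 1 + d + 1 - (k + 1) = d + 1 by omega, gaussBinom_succ_succ, qFactorial_succ d,
      qFactorial_succ k, qFactorial_succ (k + 1 + d), show k + 1 + d + 1 = k + 1 + (d + 1) by ring,
      qInt_add (k + 1) (d + 1)]
    linear_combination (q ^ (k + 1) * qInt q (d + 1)) * h1 + qInt q (k + 1) * h2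

theorem qBinom_eq_gaussBinom {m k : ℕ} (h : k ≤ m) : qBinom q m k = gaussBinom q m k := by
  rw [qBinom, ← gaussBinom_mul_qFactorial_mul_qFactorial h,
    Nat.mul_div_cancel _ (Nat.mul_pos (qFactorial_pos q k) (qFactorial_pos q (m - k)))]

theorem gaussBinom_mul {m j i : ℕ} (hjm : j ≤ m) (hij : i ≤ j) :
    gaussBinom q m j * gaussBinom q j i = gaussBinom q m i * gaussBinom q (m - i) (j - i) := by
  have hm := gaussBinom_mul_qFactorial_mul_qFactorial (q := q) hjm
  have hj := gaussBinom_mul_qFactorial_mul_qFactorial (q := q) hij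
  have hm' := gaussBinom_mul_qFactorial_mul_qFactorial (q := q) (hij.trans hjm)
  have hmi := gaussBinom_mul_qFactorial_mul_qFactorial (q := q) (Nat.sub_le_sub_right hjm i)
  rw [show m - i - (j - i) = m - j by omega] at hmi
  refine Nat.eq_of_mul_eq_mul_right (Nat.mul_pos (qFactorial_pos q i)
    (Nat.mul_pos (qFactorial_pos q (j - i)) (qFactorial_pos q (m - j)))) ?_
  calc gaussBinom q m j * gaussBinom q j i *
        (qFactorial q i * (qFactorial q (j - i) * qFactorial q (m - j)))
      = gaussBinom q m j * (gaussBinom q j i * (qFactorial q i * qFactorial q (j - i)) *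
          qFactorial q (m - j)) := by ring
    _ = gaussBinom q m i * (qFactorial q i * (gaussBinom q (m - i) (j - i) *
          (qFactorial q (j - i) * qFactorial q (m - j)))) := by rw [hj, hm, hmi, hm']
    _ = _ := by ring

variable {R : Type*} [CommRing R]

theorem sum_range_alternating_gaussBinom (m : ℕ) :
    ∑ d ∈ range (m + 1), (-1 : R) ^ d * (q : R) ^ d.choose 2 * gaussBinom q m d =
      if m = 0 then 1 else 0 := by
  rcases m with _ | m
  · simp
  rw [if_neg m.succ_ne_zero, sum_range_succ']
  -- Pascal's rule makes the sum telescope.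
  set A : ℕ → R := fun d => (-1) ^ d * (q : R) ^ (d + 1).choose 2 * gaussBinom q m d
  have hterm : ∀ d ∈ range (m + 1),
      (-1 : R) ^ (d + 1) * (q : R) ^ (d + 1).choose 2 * gaussBinom q (m + 1) (d + 1) =
        A (d + 1) - A d := by
    intro d _
    simp only [A, gaussBinom_succ_succ, Nat.choose_succ_succ' (d + 1), Nat.choose_one_right]
    push_cast
    ring
  rw [sum_congr rfl hterm, sum_range_sub A]
  simp [A, gaussBinom_eq_zero_of_lt m.lt_succ_self]

theorem sum_Icc_gaussBinom_inversion {i s t : ℕ} (hst : s ≤ t) :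
    ∑ j ∈ Icc i t, (-1 : R) ^ (j - i) * (q : R) ^ (j - i).choose 2 * gaussBinom q j i *
      gaussBinom q s j = if s = i then 1 else 0 := by
  rw [← sum_subset (Icc_subset_Icc_right hst) fun j hj hjs => by
    rw [gaussBinom_eq_zero_of_lt (m := s) (by simp_all), Nat.cast_zero, mul_zero]]
  have hterm : ∀ j ∈ Icc i s, (-1 : R) ^ (j - i) * (q : R) ^ (j - i).choose 2 *
      gaussBinom q j i * gaussBinom q s j = gaussBinom q s i *
        ((-1 : R) ^ (j - i) * (q : R) ^ (j - i).choose 2 * gaussBinom q (s - i) (j - i)) := by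
    intro j hj
    have h := gaussBinom_mul (q := q) (mem_Icc.mp hj).2 (mem_Icc.mp hj).1
    rw [mul_comm (gaussBinom q s j : ℕ)] at h
    rw [mul_assoc, ← Nat.cast_mul, h, Nat.cast_mul]
    ring
  rw [sum_congr rfl hterm, ← mul_sum]
  rcases lt_or_ge s i with hsi | his
  · simp [Icc_eq_empty_of_lt hsi, hsi.ne]
  rw [← Ico_add_one_right_eq_Icc, sum_Ico_eq_sum_range, show s + 1 - i = s - i + 1 by omega]
  simp only [Nat.add_sub_cancel_left]
  rw [sum_range_alternating_gaussBinom]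
  rcases his.eq_or_lt with rfl | hlt
  · simp
  · simp [hlt.ne', Nat.sub_ne_zero_of_lt hlt]

theorem prod_range_qInt_sub_mul_qFactorial {m j : ℕ} (h : j ≤ m) :
    (∏ k ∈ range j, qInt q (m - k)) * qFactorial q (m - j) = qFactorial q m := by
  induction j with
  | zero => simp
  | succ j ih =>
    rw [prod_range_succ, mul_assoc, ← ih (by omega), show m - j = m - (j + 1) + 1 by omega,
      qFactorial_succ, mul_comm (qFactorial q _)]

theorem prod_range_qInt_sub {m j : ℕ} (h : j ≤ m) :
    ∏ k ∈ range j, qInt q (m - k) = gaussBinom q m j * qFactorial q j := by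
  refine Nat.eq_of_mul_eq_mul_right (qFactorial_pos q (m - j)) ?_
  rw [prod_range_qInt_sub_mul_qFactorial h, mul_assoc, gaussBinom_mul_qFactorial_mul_qFactorial h]

theorem pow_sub_pow_eq_mul_qInt {m k : ℕ} (h : k ≤ m) :
    (q : R) ^ m - (q : R) ^ k = (q : R) ^ k * ((q : R) - 1) * qInt q (m - k) := by
  have hgeom : (qInt q (m - k) : R) * ((q : R) - 1) = (q : R) ^ (m - k) - 1 := by
    simpa [qInt] using geom_sum_mul (q : R) (m - k)
  rw [mul_assoc, mul_comm ((q : R) - 1), hgeom, mul_sub, ← pow_add, Nat.add_sub_cancel' h,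
    mul_one]

theorem prod_pow_sub_pow_eq_gaussBinom_mul (m j : ℕ) :
    ∏ k ∈ range j, ((q : R) ^ m - (q : R) ^ k) =
      gaussBinom q m j * ∏ k ∈ range j, ((q : R) ^ j - (q : R) ^ k) := by
  rcases lt_or_ge m j with hmj | hjm
  · rw [prod_eq_zero (mem_range.mpr hmj) (sub_self _), gaussBinom_eq_zero_of_lt hmj,
      Nat.cast_zero, zero_mul]
  have hfactor : ∀ m, j ≤ m → ∏ k ∈ range j, ((q : R) ^ m - (q : R) ^ k) =
      (∏ k ∈ range j, (q : R) ^ k * ((q : R) - 1)) *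
        (gaussBinom q m j * qFactorial q j : ℕ) := by
    intro m hjm
    rw [← prod_range_qInt_sub hjm, Nat.cast_prod, ← prod_mul_distrib]
    exact prod_congr rfl fun k hk => pow_sub_pow_eq_mul_qInt (by simp at hk; omega)
  rw [hfactor m hjm, hfactor j le_rfl, gaussBinom_self, Nat.cast_mul, Nat.cast_mul]
  ring

end GaussianBinomial

theorem Nat.cast_prod_range_pow_sub_pow {R : Type*} [CommRing R] {q : ℕ} (hq : 1 ≤ q)
    (s j : ℕ) :
    ((∏ k ∈ range j, (q ^ s - q ^ k) : ℕ) : R) =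
      ∏ k ∈ range j, ((q : R) ^ s - (q : R) ^ k) := by
  rcases lt_or_ge s j with hsj | hjs
  · rw [prod_eq_zero (mem_range.mpr hsj) (Nat.sub_self (q ^ s)),
      prod_eq_zero (mem_range.mpr hsj) (sub_self ((q : R) ^ s)), Nat.cast_zero]
  · rw [Nat.cast_prod]
    refine prod_congr rfl fun k hk => ?_
    rw [Nat.cast_sub (Nat.pow_le_pow_right hq (by simp at hk; omega)), Nat.cast_pow, Nat.cast_pow]

theorem sum_product_gaussBinom_inversion {α R : Type*} [CommRing R] [DecidableEq α] (q : ℕ)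
    (Y : Finset α) (r : α → α → ℕ) {n t i : ℕ} (hi : i < n) (hr : ∀ x y, r x y ≤ n)
    (hdiag : ∀ x, r x x = 0) (hcode : ∀ x ∈ Y, ∀ y ∈ Y, x ≠ y → n - t ≤ r x y) :
    ∑ p ∈ Y ×ˢ Y, ∑ j ∈ Icc i t, (-1 : R) ^ (j - i) * (q : R) ^ (j - i).choose 2 *
        gaussBinom q j i * gaussBinom q (n - r p.1 p.2) j =
      #{p ∈ Y ×ˢ Y | r p.1 p.2 = n - i} + #Y * ∑ j ∈ Icc i t, (-1 : R) ^ (j - i) *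
        (q : R) ^ (j - i).choose 2 * gaussBinom q j i * gaussBinom q n j := by
  have hoff : ∀ p ∈ Y.offDiag, ∑ j ∈ Icc i t, (-1 : R) ^ (j - i) *
      (q : R) ^ (j - i).choose 2 * gaussBinom q j i * gaussBinom q (n - r p.1 p.2) j =
        if n - r p.1 p.2 = i then 1 else 0 := by
    intro p hp
    obtain ⟨hx, hy, hxy⟩ := mem_offDiag.mp hp
    exact sum_Icc_gaussBinom_inversion (by have := hcode _ hx _ hy hxy; omega)
  have hcount : {p ∈ Y.offDiag | n - r p.1 p.2 = i} = {p ∈ Y ×ˢ Y | r p.1 p.2 = n - i} := by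
    ext p
    simp only [mem_filter, mem_offDiag, mem_product]
    constructor
    · rintro ⟨⟨hx, hy, -⟩, h⟩
      exact ⟨⟨hx, hy⟩, by have := hr p.1 p.2; omega⟩
    · rintro ⟨⟨hx, hy⟩, h⟩
      refine ⟨⟨hx, hy, fun hxy => ?_⟩, by omega⟩
      rw [hxy, hdiag] at h
      omega
  conv_lhs => rw [← diag_union_offDiag, sum_union (disjoint_diag_offDiag _)]
  rw [sum_congr rfl hoff, sum_boole, hcount, add_comm,
    sum_congr rfl fun p hp => by rw [(mem_diag.mp hp).2, hdiag, Nat.sub_zero], sum_const,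
    diag_card, nsmul_eq_mul]

section LinearAlgebra

open Module Submodule Matrix

variable {F : Type} [Field F] {n : ℕ}

theorem finrank_ker_mulVecLin (A : Matrix (Fin n) (Fin n) F) :
    finrank F (LinearMap.ker A.mulVecLin) = n - A.rank := by
  have := LinearMap.finrank_range_add_finrank_ker A.mulVecLin
  rw [finrank_fin_fun] at this
  rw [Matrix.rank]
  omega

theorem linearIndependent_mulVec (g : GL (Fin n) F) {j : ℕ} {a : Fin j → Fin n → F}
    (ha : LinearIndependent F a) :
    LinearIndependent F fun m => (g : Matrix (Fin n) (Fin n) F) *ᵥ a m :=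
  ha.map' (g : Matrix (Fin n) (Fin n) F).mulVecLin
    (LinearMap.ker_eq_bot.mpr (mulVec_injective_iff_isUnit.mpr g.isUnit))

variable [Fintype F]

theorem card_linearIndependent_mem {V : Type*} [AddCommGroup V] [Module F V] [Finite V]
    (W : Submodule F V) (j : ℕ) :
    Nat.card {a : Fin j → V // (∀ m, a m ∈ W) ∧ LinearIndependent F a} =
      ∏ k ∈ range j, (Fintype.card F ^ finrank F W - Fintype.card F ^ k) := by
  have e : {a : Fin j → V // (∀ m, a m ∈ W) ∧ LinearIndependent F a} ≃
      {b : Fin j → W // LinearIndependent F b} :=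
    (Equiv.subtypeSubtypeEquivSubtypeInter _ _).symm.trans <|
      Equiv.subtypeEquiv Equiv.subtypePiEquivPi fun a =>
        W.subtype.linearIndependent_iff W.ker_subtype (v := Equiv.subtypePiEquivPi a)
  rw [Nat.card_congr e]
  rcases le_or_gt j (finrank F W) with hj | hj
  · rw [card_linearIndependent hj, Fin.prod_univ_eq_prod_range (fun k => _ ^ _ - _ ^ k)]
  · have : IsEmpty {b : Fin j → W // LinearIndependent F b} :=
      ⟨fun b => by simpa using (b.2.fintype_card_le_finrank.trans_lt hj).ne⟩
    rw [Nat.card_of_isEmpty, prod_eq_zero (mem_range.mpr hj) (Nat.sub_self (_ ^ finrank F W))]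

theorem card_linearIndependent_agree (x y : Matrix (Fin n) (Fin n) F) (j : ℕ) :
    Nat.card {a : Fin j → Fin n → F //
      LinearIndependent F a ∧ ∀ m, x *ᵥ a m = y *ᵥ a m} =
      ∏ k ∈ range j, (Fintype.card F ^ (n - (x - y).rank) - Fintype.card F ^ k) := by
  rw [← finrank_ker_mulVecLin, ← card_linearIndependent_mem]
  refine Nat.card_congr (Equiv.subtypeEquivRight fun a => ?_)
  simp only [LinearMap.mem_ker, mulVecLin_apply, sub_mulVec, sub_eq_zero, and_comm]

open Classical in
theorem card_notMem_span {V : Type*} [AddCommGroup V] [Module F V] [Fintype V]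
    {j : ℕ} {b : Fin j → V} (hb : LinearIndependent F b) :
    #{w | w ∉ span F (Set.range b)} = Fintype.card F ^ finrank F V - Fintype.card F ^ j := by
  rw [filter_not, card_sdiff_of_subset (filter_subset _ _), card_univ,
    card_eq_pow_finrank (K := F),
    ← Fintype.card_subtype, card_eq_pow_finrank (K := F) (V := span F (Set.range b)),
    finrank_span_eq_card hb, Fintype.card_fin]

open Classical in
noncomputable def transporters (Y : Finset (GL (Fin n) F)) {j : ℕ} (a b : Fin j → Fin n → F) :
    Finset (GL (Fin n) F) :=
  {g ∈ Y | ∀ m, (g : Matrix (Fin n) (Fin n) F) *ᵥ a m = b m}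

theorem isTDesignGL_iff {Y : Finset (GL (Fin n) F)} {t : ℕ} :
    IsTDesignGL F n t Y ↔ ∃ r, ∀ a b : Fin t → Fin n → F,
      LinearIndependent F a → LinearIndependent F b → #(transporters Y a b) = r := by
  simp only [IsTDesignGL, transporters, mem_coe, ← Nat.card_eq_finsetCard, mem_filter]

open Classical in
theorem card_transporters_eq_sum (Y : Finset (GL (Fin n) F)) {j : ℕ}
    {a b : Fin j → Fin n → F} {v : Fin n → F} (hav : LinearIndependent F (Fin.snoc a v)) :
    #(transporters Y a b) = ∑ w with w ∉ span F (Set.range b),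
      #(transporters Y (Fin.snoc a v) (Fin.snoc b w)) := by
  have hmaps : Set.MapsTo (fun g : GL (Fin n) F => (g : Matrix (Fin n) (Fin n) F) *ᵥ v)
      (transporters Y a b) ({w | w ∉ span F (Set.range b)} : Finset _) := by
    intro g hg
    have hgab : (fun m => (g : Matrix (Fin n) (Fin n) F) *ᵥ a m) = b :=
      funext (mem_filter.mp hg).2
    have := linearIndependent_mulVec g hav
    rw [← Function.comp_def, Fin.comp_snoc, Function.comp_def, hgab] at this
    simpa using (linearIndependent_finSnoc.mp this).2
  rw [card_eq_sum_card_fiberwise hmaps]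
  refine sum_congr rfl fun w _ => congrArg card (Finset.ext fun g => ?_)
  simp only [transporters, mem_filter, Fin.forall_fin_succ', Fin.snoc_castSucc, Fin.snoc_last]
  tauto

theorem IsTDesignGL.of_succ {Y : Finset (GL (Fin n) F)} {j : ℕ} (hj : j < n)
    (h : IsTDesignGL F n (j + 1) Y) : IsTDesignGL F n j Y := by
  classical
  obtain ⟨r, hr⟩ := isTDesignGL_iff.mp h
  refine isTDesignGL_iff.mpr
    ⟨(Fintype.card F ^ n - Fintype.card F ^ j) * r, fun a b ha hb => ?_⟩
  obtain ⟨v, hav⟩ := exists_linearIndependent_snoc_of_lt_finrank ha (by rwa [finrank_fin_fun])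
  have hcompl := card_notMem_span (F := F) hb
  rw [finrank_fin_fun] at hcompl
  rw [card_transporters_eq_sum Y hav, ← hcompl, ← smul_eq_mul, ← sum_const]
  exact sum_congr rfl fun w hw =>
    hr _ _ hav (linearIndependent_finSnoc.mpr ⟨hb, (mem_filter.mp hw).2⟩)

theorem IsTDesignGL.mono {Y : Finset (GL (Fin n) F)} {t j : ℕ} (h : IsTDesignGL F n t Y)
    (htn : t ≤ n) (hjt : j ≤ t) : IsTDesignGL F n j Y :=
  Nat.decreasingInduction (fun k hk ih => ih.of_succ (by omega)) h hjt

open Classical in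
theorem card_linearIndependent_mul_eq_card {Y : Finset (GL (Fin n) F)} {j r : ℕ} (hj : j ≤ n)
    (hr : ∀ a b : Fin j → Fin n → F,
      LinearIndependent F a → LinearIndependent F b → #(transporters Y a b) = r) :
    #{a : Fin j → Fin n → F | LinearIndependent F a} * r = #Y := by
  set a₀ : Fin j → Fin n → F := fun m => Pi.basisFun F (Fin n) (Fin.castLE hj m)
  have ha₀ : LinearIndependent F a₀ :=
    (Pi.basisFun F (Fin n)).linearIndependent.comp _ (Fin.castLE_injective hj)
  have hmaps : Set.MapsTo (fun (g : GL (Fin n) F) m => (g : Matrix (Fin n) (Fin n) F) *ᵥ a₀ m)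
      Y ({a : Fin j → Fin n → F | LinearIndependent F a} : Finset _) := fun g _ => by
    simpa using linearIndependent_mulVec g ha₀
  rw [card_eq_sum_card_fiberwise hmaps, ← smul_eq_mul, ← sum_const]
  refine sum_congr rfl fun b hb => ?_
  rw [← hr _ b ha₀ (mem_filter.mp hb).2, transporters]
  simp only [funext_iff]

open Classical in
theorem IsTDesignGL.sum_sum_card_agree {Y : Finset (GL (Fin n) F)} {j : ℕ}
    (hY : IsTDesignGL F n j Y) (hj : j ≤ n) :
    ∑ x ∈ Y, ∑ y ∈ Y, #{a : Fin j → Fin n → F | LinearIndependent F a ∧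
      ∀ m, (x : Matrix (Fin n) (Fin n) F) *ᵥ a m = (y : Matrix (Fin n) (Fin n) F) *ᵥ a m} =
        #Y * #Y := by
  obtain ⟨r, hr⟩ := isTDesignGL_iff.mp hY
  rw [← smul_eq_mul, ← sum_const]
  refine sum_congr rfl fun x _ => ?_
  -- Count the pairs `(y, a)` with `x a = y a` by `a` first.
  have hswap := sum_card_bipartiteAbove_eq_sum_card_bipartiteBelow (s := Y)
    (t := {a : Fin j → Fin n → F | LinearIndependent F a})
    (r := fun (y : GL (Fin n) F) a =>
      ∀ m, (x : Matrix (Fin n) (Fin n) F) *ᵥ a m = (y : Matrix (Fin n) (Fin n) F) *ᵥ a m)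
  simp only [bipartiteAbove, bipartiteBelow, filter_filter] at hswap
  rw [hswap, ← card_linearIndependent_mul_eq_card hj hr, ← smul_eq_mul, ← sum_const]
  refine sum_congr rfl fun a ha => ?_
  have ha' := (mem_filter.mp ha).2
  rw [← hr a _ ha' (linearIndependent_mulVec x ha'), transporters]
  simp only [eq_comm]

theorem IsTDesignGL.sum_gaussBinom_mul_prod {Y : Finset (GL (Fin n) F)} {j : ℕ}
    (hY : IsTDesignGL F n j Y) (hj : j ≤ n) :
    (∑ p ∈ Y ×ˢ Y, (gaussBinom (Fintype.card F)
        (n - ((p.1 : Matrix (Fin n) (Fin n) F) - (p.2 : Matrix (Fin n) (Fin n) F)).rank) j : ℝ)) *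
      ∏ k ∈ range j, ((Fintype.card F : ℝ) ^ n - (Fintype.card F : ℝ) ^ k) =
        #Y * #Y * gaussBinom (Fintype.card F) n j := by
  classical
  set q := Fintype.card F
  have hagree : ∀ x y : GL (Fin n) F,
      (#{a : Fin j → Fin n → F | LinearIndependent F a ∧ ∀ m,
        (x : Matrix (Fin n) (Fin n) F) *ᵥ a m = (y : Matrix (Fin n) (Fin n) F) *ᵥ a m} : ℝ) =
      gaussBinom q (n - ((x : Matrix (Fin n) (Fin n) F) - y).rank) j *
        ∏ k ∈ range j, ((q : ℝ) ^ j - (q : ℝ) ^ k) := by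
    intro x y
    rw [← Fintype.card_subtype, ← Nat.card_eq_fintype_card, card_linearIndependent_agree,
      Nat.cast_prod_range_pow_sub_pow Fintype.card_pos, prod_pow_sub_pow_eq_gaussBinom_mul]
  have hsum := congrArg (Nat.cast (R := ℝ)) (hY.sum_sum_card_agree hj)
  push_cast [hagree] at hsum
  rw [prod_pow_sub_pow_eq_gaussBinom_mul, ← hsum, sum_product]
  simp only [sum_mul]
  exact sum_congr rfl fun x _ => sum_congr rfl fun y _ => by ring

end LinearAlgebra

theorem statement14_general (q : ℕ) (F : Type) [Field F] [Fintype F]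
    (hF : Fintype.card F = q) (n t : ℕ) (htn : t ≤ n)
    (Y : Finset (GL (Fin n) F)) (hYne : Y.Nonempty)
    (hdesign : IsTDesignGL F n t ↑Y) (hcode : IsDCodeGL F n (n - t) ↑Y)
    (i : ℕ) (hi : i < n) :
    (1 / (Y.card : ℝ)) *
        ((Y ×ˢ Y).filter (fun p =>
          Matrix.rank ((p.1 : Matrix (Fin n) (Fin n) F) - (p.2 : Matrix (Fin n) (Fin n) F))
            = n - i)).card
      = ∑ j ∈ Finset.Icc i t,
          (-1 : ℝ) ^ (j - i) * (q : ℝ) ^ Nat.choose (j - i) 2 *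
            (qBinom q j i : ℝ) * (qBinom q n j : ℝ) *
            ((Y.card : ℝ) / ∏ k ∈ Finset.range j, ((q : ℝ) ^ n - (q : ℝ) ^ k) - 1) := by
  classical
  subst hF
  have hY : (#Y : ℝ) ≠ 0 := by exact_mod_cast hYne.card_pos.ne'
  have hprod : ∀ j ∈ Icc i t,
      ∏ k ∈ range j, ((Fintype.card F : ℝ) ^ n - (Fintype.card F : ℝ) ^ k) ≠ 0 :=
    fun j hj => prod_ne_zero_iff.mpr fun k hk => sub_ne_zero.mpr (pow_lt_pow_right₀
      (by exact_mod_cast Fintype.one_lt_card) (by simp at hj hk; omega)).ne'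
  have hmoment := fun j (hj : j ∈ Icc i t) => eq_div_of_mul_eq (hprod j hj)
    ((hdesign.mono htn (mem_Icc.mp hj).2).sum_gaussBinom_mul_prod (by simp at hj; omega))
  have hsplit := sum_product_gaussBinom_inversion (R := ℝ) (Fintype.card F) Y
    (fun x y => ((x : Matrix (Fin n) (Fin n) F) - y).rank) hi (fun _ _ => Matrix.rank_le_width _)
    (by simp) hcode
  rw [sum_comm] at hsplit
  simp only [← mul_sum] at hsplit
  rw [sum_congr rfl fun j hj => by rw [hmoment j hj]] at hsplit
  rw [eq_sub_of_add_eq hsplit.symm, mul_sum, ← sum_sub_distrib, mul_sum]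
  refine sum_congr rfl fun j hj => ?_
  obtain ⟨hij, hjt⟩ := mem_Icc.mp hj
  rw [qBinom_eq_gaussBinom hij, qBinom_eq_gaussBinom (hjt.trans htn)]
  field_simp [hprod j hj]

/-- The distance distribution of a subset of `GL(n,q)` which is both a `t`-design and an
`(n−t)`-code is uniquely determined: for `0 ≤ i ≤ n−1`,
`A_{n−i} = Σ_{j=i}^{t} (−1)^{j−i} q^{C(j−i,2)} [j choose i]_q [n choose j]_q
(|Y| / ∏_{k=0}^{j−1}(q^n − q^k) − 1)`. -/
theorem statement14 (q : ℕ) (hq : IsPrimePow q) (F : Type) [Field F] [Fintype F]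
    [DecidableEq F] (hF : Fintype.card F = q) (n t : ℕ) (htn : t ≤ n)
    (Y : Finset (GL (Fin n) F)) (hYne : Y.Nonempty)
    (hdesign : IsTDesignGL F n t ↑Y) (hcode : IsDCodeGL F n (n - t) ↑Y)
    (i : ℕ) (hi : i < n) :
    (1 / (Y.card : ℝ)) *
        ((Y ×ˢ Y).filter (fun p =>
          Matrix.rank ((p.1 : Matrix (Fin n) (Fin n) F) - (p.2 : Matrix (Fin n) (Fin n) F))
            = n - i)).card
      = ∑ j ∈ Finset.Icc i t,
          (-1 : ℝ) ^ (j - i) * (q : ℝ) ^ Nat.choose (j - i) 2 *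
            (qBinom q j i : ℝ) * (qBinom q n j : ℝ) *
            ((Y.card : ℝ) / ∏ k ∈ Finset.range j, ((q : ℝ) ^ n - (q : ℝ) ^ k) - 1) :=
  statement14_general q F hF n t htn Y hYne hdesign hcode i hi
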